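/- Let (X_i)_{i ∈ I} be a family of topological spaces, 𝓕 a filter on I, and x = (x_i) a point of ∏_{i ∈ I} X_i. Then the neighborhood filter 𝓥_𝓕(x) of x in the 𝓕-topology equals the 𝓕-filter of the neighborhood filters of the coordinates: 𝓥_𝓕(x) = ∏^𝓕 𝓥(x_i), where 𝓥(x_i) denotes the neighborhood filter of x_i in X_i. -/
import Mathlib


open Set TopologicalSpace Topology Filter

/-- The `𝓕`-topology on `∏ i, X i` determined by a filter `F` on `I`: the topology
generated by the boxes `∏ i, U i` (each `U i` open) whose set of distinguished
indices `{i | U i = univ}` belongs to `F`. -/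
def FTopology {I : Type*} (X : I → Type*) [∀ i, TopologicalSpace (X i)]
    (F : Filter I) : TopologicalSpace (∀ i, X i) :=
  TopologicalSpace.generateFrom
    {S | ∃ U : ∀ i, Set (X i), (∀ i, IsOpen (U i)) ∧ {i | U i = Set.univ} ∈ F ∧
      S = Set.pi Set.univ U}

/-- The `𝓕`-filter on `∏ i, X i`: the filter generated by the boxes `∏ i, B i`
with `B i ∈ 𝓕ᵢ` for all `i` and distinguished index set in `𝓕`. -/
def FFilter {I : Type*} {X : I → Type*} (Fi : ∀ i, Filter (X i))
    (F : Filter I) : Filter (∀ i, X i) :=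
  Filter.generate
    {S | ∃ B : ∀ i, Set (X i), (∀ i, B i ∈ Fi i) ∧ {i | B i = Set.univ} ∈ F ∧
      S = Set.pi Set.univ B}

/-- The neighborhood filter of a point `x` in the `𝓕`-topology on the product is
the `𝓕`-filter of the neighborhood filters of its coordinates. -/
theorem fTopology_nhds_eq_fFilter {I : Type*} (X : I → Type*)
    [∀ i, TopologicalSpace (X i)] (F : Filter I) (x : ∀ i, X i) :
    @nhds (∀ i, X i) (FTopology X F) x = FFilter (fun i => nhds (x i)) F := by
  letI := FTopology X F
  apply le_antisymm
  · rw [FFilter, Filter.le_generate_iff]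
    rintro S ⟨B, hB, hF, rfl⟩
    have hx : x ∈ Set.pi Set.univ fun i => interior (B i) :=
      fun i _ => mem_interior_iff_mem_nhds.2 (hB i)
    refine Filter.mem_of_superset (IsOpen.mem_nhds ?_ hx) ?_
    · exact TopologicalSpace.isOpen_generateFrom_of_mem
        ⟨fun i => interior (B i), fun i => isOpen_interior,
          Filter.mem_of_superset hF (fun i hi => by simp only [Set.mem_setOf_eq] at hi ⊢; simp [hi]),
          rfl⟩
    · exact Set.pi_mono fun i _ => interior_subset
  · rw [FTopology, nhds_generateFrom]
    refine le_iInf₂ fun S hS => ?_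
    obtain ⟨hxS, B, hB, hF, rfl⟩ := hS
    refine Filter.le_principal_iff.2 (Filter.mem_generate_of_mem ?_)
    exact ⟨B, fun i => (hB i).mem_nhds (hxS i (Set.mem_univ i)), hF, rfl⟩
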